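/- Let a = a' + εa'' be a complexified dual quaternion with a'·conj(a') = 0, and suppose a' and conj(a') are linearly independent over ℂ. Set f := a'² + conj(a')². Then f is a nonzero scalar. Moreover, writing x = αa + β·conj_c(a) + ε(γa' + δ·conj(a')) where conj_c(a) := conj(a') − εa'', the primal part of x·conj(x) equals αβ·f; hence x·conj(x) has vanishing primal part iff α = 0 or β = 0. -/

import Mathlib

/-!
Because `a' * conj a' = conj a' * a' = 0`, the scalar `f` equals `(a' + conj a')² = (2 Re a')²`,
and `a' + conj a' ≠ 0` by linear independence. The primal part of `x` is `α a' + β conj a'`;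
expanding its norm, the `a' conj a'` terms vanish and only the cross term `αβ f` survives.
-/

open Quaternion TrivSqZeroExt

/-- The complexified dual quaternions. -/
noncomputable abbrev DHC := DualNumber (Quaternion ℂ)

/-- Dual quaternion conjugation (fixing the complex scalar unit and `ε`). -/
noncomputable def dconj (q : DHC) : DHC := (star q.fst, star q.snd)

/-- The point `x = α a + β conj_c(a) + ε(γ a' + δ conj a')` where
`a = a' + ε a''` and `conj_c(a) = conj a' - ε a''`. -/
noncomputable def xpt (a' a'' : Quaternion ℂ) (α β γ δ : ℂ) : DHC :=
  α • (inl a' + inr a'') + β • (inl (star a') - inr a'') +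
    inr (γ • a' + δ • star a')

namespace Quaternion

variable {R : Type*} [CommRing R]

theorem smul_add_smul_star_mul_star (a : ℍ[R]) (α β : R) :
    (α • a + β • star a) * star (α • a + β • star a) =
      (α ^ 2 + β ^ 2) • (a * star a) + (α * β) • (a ^ 2 + star a ^ 2) := by
  rw [star_add, star_smul, star_smul, star_star]
  simp only [add_mul, mul_add, smul_mul_smul_comm, star_comm_self' a, sq]
  module

theorem sq_add_star_sq_of_mul_star_eq_zero {a : ℍ[R]} (h : a * star a = 0) :
    a ^ 2 + star a ^ 2 = algebraMap R ℍ[R] ((2 * a.re) ^ 2) := by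
  have hsa : star a * a = 0 := by rw [star_comm_self', h]
  calc a ^ 2 + star a ^ 2 = (a + star a) ^ 2 := by
        rw [sq, sq, sq, add_mul, mul_add, mul_add, h, hsa]; abel
    _ = _ := by rw [self_add_star', algebraMap_def, coe_pow]

theorem two_mul_re_ne_zero_of_linearIndependent [Nontrivial R] {a : ℍ[R]}
    (h : LinearIndependent R ![a, star a]) : 2 * a.re ≠ 0 := by
  intro hre
  exact one_ne_zero (LinearIndependent.pair_iff.mp h 1 1 (by
    rw [one_smul, one_smul, self_add_star', hre, coe_zero])).1

end Quaternion

theorem xpt_fst (a' a'' : Quaternion ℂ) (α β γ δ : ℂ) :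
    (xpt a' a'' α β γ δ).fst = α • a' + β • star a' := by
  simp [xpt]

theorem dconj_fst (q : DHC) : (dconj q).fst = star q.fst := rfl

/-- Let `a = a' + ε a''` with `a' conj a' = 0` and `a'`, `conj a'` linearly
independent over `ℂ`. Then `f = a'² + (conj a')²` is a nonzero scalar, the
primal part of `x conj x` for `x = α a + β conj_c(a) + ε(γ a' + δ conj a')`
equals `αβ f`, and it vanishes iff `α = 0` or `β = 0`. -/
theorem primal_norm_on_U (a' a'' : Quaternion ℂ)
    (h0 : a' * star a' = 0)
    (hli : LinearIndependent ℂ ![a', star a']) :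
    (∃ c : ℂ, c ≠ 0 ∧
        a' ^ 2 + star a' ^ 2 = algebraMap ℂ (Quaternion ℂ) c) ∧
    ∀ α β γ δ : ℂ,
      (xpt a' a'' α β γ δ * dconj (xpt a' a'' α β γ δ)).fst =
          (α * β) • (a' ^ 2 + star a' ^ 2) ∧
      ((xpt a' a'' α β γ δ * dconj (xpt a' a'' α β γ δ)).fst = 0 ↔
          α = 0 ∨ β = 0) := by
  obtain ⟨c, hc, hf⟩ : ∃ c : ℂ, c ≠ 0 ∧ a' ^ 2 + star a' ^ 2 = algebraMap ℂ (Quaternion ℂ) c :=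
    ⟨_, pow_ne_zero 2 (two_mul_re_ne_zero_of_linearIndependent hli),
      sq_add_star_sq_of_mul_star_eq_zero h0⟩
  have hprimal (α β γ δ : ℂ) : (xpt a' a'' α β γ δ * dconj (xpt a' a'' α β γ δ)).fst =
      (α * β) • (a' ^ 2 + star a' ^ 2) := by
    rw [fst_mul, dconj_fst, xpt_fst, smul_add_smul_star_mul_star, h0, smul_zero, zero_add]
  refine ⟨⟨c, hc, hf⟩, fun α β γ δ => ⟨hprimal α β γ δ, ?_⟩⟩
  rw [hprimal, hf, algebraMap_def, smul_coe, ← coe_zero, coe_injective.eq_iff, mul_eq_zero,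
    mul_eq_zero, or_iff_left hc]
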